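/- Fix an integer j ≥ 1 and let u : ℝ³ → ℂ be smooth and satisfy the submodel equations of the CP¹-like model: (1+|u|²)□u − (j+1)ū⟨∂u,∂u⟩ = 0 and ⟨∂u,∂ū⟩ = 0. Then for every integer m with −j ≤ m ≤ j and all constants α, β ∈ ℂ, the current J_μ^{(j,m)} = α·ū^{j−m}∂_μu/(1+|u|²)^{j+1} + β·u^{j+m}∂_μū/(1+|u|²)^{j+1}, μ = 0,1,2, is a conserved current, i.e. ∂₀J₀^{(j,m)} − ∂₁J₁^{(j,m)} − ∂₂J₂^{(j,m)} = 0 on ℝ³. -/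

import Mathlib

open Complex ComplexConjugate Finset

/-- Partial derivative in direction `μ` of a complex-valued function on `ℝ³`. -/
noncomputable def pd (μ : Fin 3) (f : (Fin 3 → ℝ) → ℂ) (x : Fin 3 → ℝ) : ℂ :=
  fderiv ℝ f x (Pi.single μ 1)

/-- The d'Alembertian `□u = ∂₀∂₀u − ∂₁∂₁u − ∂₂∂₂u` for the metric `diag(1,−1,−1)`. -/
noncomputable def dalembert (u : (Fin 3 → ℝ) → ℂ) (x : Fin 3 → ℝ) : ℂ :=
  pd 0 (pd 0 u) x - pd 1 (pd 1 u) x - pd 2 (pd 2 u) x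

/-- Minkowski product of gradients `⟨∂f,∂g⟩ = ∂₀f·∂₀g − ∂₁f·∂₁g − ∂₂f·∂₂g`. -/
noncomputable def minkGrad (f g : (Fin 3 → ℝ) → ℂ) (x : Fin 3 → ℝ) : ℂ :=
  pd 0 f x * pd 0 g x - pd 1 f x * pd 1 g x - pd 2 f x * pd 2 g x

/-- `(J₀,J₁,J₂)` is a conserved current if `∂₀J₀ − ∂₁J₁ − ∂₂J₂ = 0` identically. -/
def IsConservedCurrent (J : Fin 3 → (Fin 3 → ℝ) → ℂ) : Prop :=
  ∀ x, pd 0 (J 0) x - pd 1 (J 1) x - pd 2 (J 2) x = 0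

section helpers
variable {f g : (Fin 3 → ℝ) → ℂ} {x : Fin 3 → ℝ} {μ : Fin 3}

lemma pd_add (hf : DifferentiableAt ℝ f x) (hg : DifferentiableAt ℝ g x) :
    pd μ (fun y => f y + g y) x = pd μ f x + pd μ g x := by
  simp [pd, fderiv_fun_add hf hg]

lemma pd_const (c : ℂ) : pd μ (fun _ => c) x = 0 := by simp [pd]

lemma pd_mul (hf : DifferentiableAt ℝ f x) (hg : DifferentiableAt ℝ g x) :
    pd μ (fun y => f y * g y) x = pd μ f x * g x + f x * pd μ g x := by
  simp [pd, fderiv_fun_mul hf hg]; ring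

lemma pd_const_mul (c : ℂ) (hf : DifferentiableAt ℝ f x) :
    pd μ (fun y => c * f y) x = c * pd μ f x := by
  simp [pd, fderiv_const_mul hf c]

lemma pd_conj (hf : DifferentiableAt ℝ f x) :
    pd μ (fun y => conj (f y)) x = conj (pd μ f x) := by
  have h : (fun y => conj (f y)) = (Complex.conjCLE : ℂ ≃L[ℝ] ℂ) ∘ f := rfl
  rw [pd, h, ContinuousLinearEquiv.comp_fderiv]
  rfl

lemma pd_pow (n : ℕ) (hf : DifferentiableAt ℝ f x) :
    pd μ (fun y => f y ^ n) x = n * f x ^ (n - 1) * pd μ f x := by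
  induction n with
  | zero => simp [pd]
  | succ k ih =>
    have h1 : pd μ (fun y => f y ^ k * f y) x
        = pd μ (fun y => f y ^ k) x * f x + f x ^ k * pd μ f x := pd_mul (hf.pow k) hf
    simp only [pow_succ]
    rw [h1, ih]
    rcases Nat.eq_zero_or_pos k with hk | hk
    · simp [hk]
    · have hk1 : k - 1 + 1 = k := Nat.succ_pred_eq_of_pos hk
      have h2 : f x ^ (k - 1) * f x = f x ^ k := by rw [← pow_succ, hk1]
      rw [show (k + 1 : ℕ) - 1 = k from rfl]
      push_cast
      linear_combination (k : ℂ) * pd μ f x * h2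

lemma pd_inv (hf : DifferentiableAt ℝ f x) (h0 : f x ≠ 0) :
    pd μ (fun y => (f y)⁻¹) x = -(pd μ f x) / f x ^ 2 := by
  have h := fderiv_comp x (differentiableAt_inv h0) hf
  rw [pd, show (fun y => (f y)⁻¹) = Inv.inv ∘ f from rfl, h, fderiv_inv' h0]
  simp only [ContinuousLinearMap.comp_apply, ContinuousLinearMap.neg_apply,
    ContinuousLinearMap.mulLeftRight_apply, pd]
  ring

lemma contDiff_pd (hf : ContDiff ℝ (⊤ : ℕ∞) f) : ContDiff ℝ (⊤ : ℕ∞) (pd μ f) := by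
  have h1 : ContDiff ℝ (⊤ : ℕ∞) (fderiv ℝ f) := hf.fderiv_right (by simp)
  exact (ContinuousLinearMap.apply ℝ ℂ (Pi.single μ 1 : Fin 3 → ℝ)).contDiff.comp h1

end helpers

/-- For a solution of the submodel of the `CP¹`-like model, the current
`J_μ^{(j,m)} = α ū^{j−m}∂_μu/(1+|u|²)^{j+1} + β u^{j+m}∂_μū/(1+|u|²)^{j+1}`
is conserved for every integer `−j ≤ m ≤ j` and all constants `α β : ℂ`. -/
theorem cp1_like_submodel_current_conserved (j : ℕ) (hj : 1 ≤ j)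
    (u : (Fin 3 → ℝ) → ℂ) (hu : ContDiff ℝ (⊤ : ℕ∞) u)
    (heom : ∀ x, (1 + u x * conj (u x)) * dalembert u x
        - ((j : ℂ) + 1) * conj (u x) * minkGrad u u x = 0)
    (hnull : ∀ x, minkGrad u (fun y => conj (u y)) x = 0)
    (m : ℤ) (hm1 : -(j : ℤ) ≤ m) (hm2 : m ≤ (j : ℤ)) (α β : ℂ) :
    IsConservedCurrent (fun μ x =>
      α * (conj (u x)) ^ ((j : ℤ) - m) * pd μ u x / (1 + u x * conj (u x)) ^ (j + 1)
      + β * (u x) ^ ((j : ℤ) + m) * pd μ (fun y => conj (u y)) x /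
          (1 + u x * conj (u x)) ^ (j + 1)) := by
  obtain ⟨a, ha⟩ : ∃ a : ℕ, (j : ℤ) - m = (a : ℤ) := ⟨((j : ℤ) - m).toNat, by omega⟩
  obtain ⟨b, hb⟩ : ∃ b : ℕ, (j : ℤ) + m = (b : ℤ) := ⟨((j : ℤ) + m).toNat, by omega⟩
  -- basic smoothness facts
  have hud : Differentiable ℝ u := hu.differentiable (by simp)
  have hcu : ContDiff ℝ (⊤ : ℕ∞) (fun y => conj (u y)) :=
    (Complex.conjCLE : ℂ ≃L[ℝ] ℂ).contDiff.comp hu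
  have hpdv : ∀ σ : Fin 3, pd σ (fun y => conj (u y)) = fun y => conj (pd σ u y) :=
    fun σ => funext fun y => pd_conj (hud y)
  have hpdu : ∀ σ : Fin 3, ContDiff ℝ (⊤ : ℕ∞) (pd σ u) := fun σ => contDiff_pd hu
  have hpducd : ∀ σ : Fin 3, Differentiable ℝ (pd σ u) := fun σ => (hpdu σ).differentiable (by simp)
  have hW : ContDiff ℝ (⊤ : ℕ∞) (fun y => 1 + u y * conj (u y)) := contDiff_const.add (hu.mul hcu)
  have hW0 : ∀ y, (1 + u y * conj (u y)) ≠ 0 := by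
    intro y
    rw [Complex.mul_conj]
    rw [show (1 : ℂ) + (Complex.normSq (u y) : ℝ) = ((1 + Complex.normSq (u y) : ℝ) : ℂ) by
      push_cast; ring]
    rw [Ne, Complex.ofReal_eq_zero]
    have := Complex.normSq_nonneg (u y)
    intro h; linarith
  have hWp : ∀ y, (1 + u y * conj (u y)) ^ (j + 1) ≠ 0 := fun y => pow_ne_zero _ (hW0 y)
  intro x
  -- rewrite the current in product form
  have hJ : ∀ μ : Fin 3, (fun x =>
      α * (conj (u x)) ^ ((j : ℤ) - m) * pd μ u x / (1 + u x * conj (u x)) ^ (j + 1)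
      + β * (u x) ^ ((j : ℤ) + m) * pd μ (fun y => conj (u y)) x /
          (1 + u x * conj (u x)) ^ (j + 1)) = (fun x =>
      (α * conj (u x) ^ a * pd μ u x + β * u x ^ b * conj (pd μ u x)) *
        (((1 + u x * conj (u x)) ^ (j + 1))⁻¹)) := by
    intro μ
    funext y
    rw [ha, hb, zpow_natCast, zpow_natCast, hpdv μ]
    rw [← add_div, div_eq_mul_inv]
  simp only [hJ]
  -- differentiability of the pieces
  have dA : ∀ σ : Fin 3, DifferentiableAt ℝ
      (fun y => α * conj (u y) ^ a * pd σ u y + β * u y ^ b * conj (pd σ u y)) x := by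
    intro σ
    apply DifferentiableAt.add
    · exact ((differentiableAt_const α).mul
        (((hcu.differentiable (by simp)) x).pow a)).mul ((hpducd σ) x)
    · exact ((differentiableAt_const β).mul ((hud x).pow b)).mul
        ((Complex.conjCLE : ℂ ≃L[ℝ] ℂ).differentiable.differentiableAt.comp x ((hpducd σ) x))
  have dW : DifferentiableAt ℝ (fun y => 1 + u y * conj (u y)) x :=
    (hW.differentiable (by simp)) x
  have dWp : DifferentiableAt ℝ (fun y => (1 + u y * conj (u y)) ^ (j + 1)) x := dW.pow _
  have dInv : DifferentiableAt ℝ (fun y => ((1 + u y * conj (u y)) ^ (j + 1))⁻¹) x :=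
    dWp.inv (hWp x)
  -- compute the divergence term by term
  have key : ∀ σ : Fin 3,
      pd σ (fun y =>
        (α * conj (u y) ^ a * pd σ u y + β * u y ^ b * conj (pd σ u y)) *
          (((1 + u y * conj (u y)) ^ (j + 1))⁻¹)) x
      = (α * ((a : ℂ) * conj (u x) ^ (a - 1) * conj (pd σ u x)) * pd σ u x
          + α * conj (u x) ^ a * pd σ (pd σ u) x
          + (β * ((b : ℂ) * u x ^ (b - 1) * pd σ u x) * conj (pd σ u x)
          + β * u x ^ b * conj (pd σ (pd σ u) x)))
          * (((1 + u x * conj (u x)) ^ (j + 1))⁻¹)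
        + (α * conj (u x) ^ a * pd σ u x + β * u x ^ b * conj (pd σ u x)) *
          (-(((j : ℂ) + 1) * (1 + u x * conj (u x)) ^ j *
              (pd σ u x * conj (u x) + u x * conj (pd σ u x)))
            / (((1 + u x * conj (u x)) ^ (j + 1)) ^ 2)) := by
    intro σ
    have d1 : DifferentiableAt ℝ (fun y => α * conj (u y) ^ a * pd σ u y) x :=
      ((differentiableAt_const α).mul (((hcu.differentiable (by simp)) x).pow a)).mul ((hpducd σ) x)
    have d2 : DifferentiableAt ℝ (fun y => β * u y ^ b * conj (pd σ u y)) x :=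
      ((differentiableAt_const β).mul ((hud x).pow b)).mul
        ((Complex.conjCLE : ℂ ≃L[ℝ] ℂ).differentiable.differentiableAt.comp x ((hpducd σ) x))
    have d3 : DifferentiableAt ℝ (fun y => α * conj (u y) ^ a) x :=
      (differentiableAt_const α).mul (((hcu.differentiable (by simp)) x).pow a)
    have d4 : DifferentiableAt ℝ (fun y => β * u y ^ b) x :=
      (differentiableAt_const β).mul ((hud x).pow b)
    have d5 : DifferentiableAt ℝ (fun y => conj (u y)) x := (hcu.differentiable (by simp)) x
    have d6 : DifferentiableAt ℝ (fun y => conj (pd σ u y)) x :=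
      (Complex.conjCLE : ℂ ≃L[ℝ] ℂ).differentiable.differentiableAt.comp x ((hpducd σ) x)
    rw [pd_mul (dA σ) dInv, pd_add d1 d2,
      pd_mul d3 ((hpducd σ) x), pd_const_mul (f := fun y => conj (u y) ^ a) α (d5.pow a), pd_pow a d5, pd_conj (hud x),
      pd_mul d4 d6, pd_const_mul (f := fun y => u y ^ b) β ((hud x).pow b), pd_pow b (hud x),
      pd_conj ((hpducd σ) x),
      pd_inv dWp (hWp x), pd_pow (j + 1) dW,
      pd_add (g := fun y => u y * conj (u y)) (differentiableAt_const (1 : ℂ)) ((hud x).mul d5),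
      pd_const (1 : ℂ), pd_mul (hud x) d5, pd_conj (hud x)]
    simp only [Nat.add_sub_cancel]
    push_cast
    ring
  simp only [key]
  -- the equations of motion and null condition at x
  have e1 := heom x
  have e2 := congrArg (starRingEnd ℂ) (heom x)
  have e3 := hnull x
  simp only [dalembert, minkGrad, map_sub, map_add, map_mul, map_one, map_zero,
    Complex.conj_conj, map_natCast, map_ofNat, hpdv] at e1 e2 e3
  have hP := hWp x
  field_simp
  linear_combination
    (α * conj (u x) ^ a * (1 + u x * conj (u x)) ^ j) * e1
    + (β * u x ^ b * (1 + u x * conj (u x)) ^ j) * e2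
    + (α * (a : ℂ) * conj (u x) ^ (a - 1) * (1 + u x * conj (u x)) ^ (j + 1)
        + β * (b : ℂ) * u x ^ (b - 1) * (1 + u x * conj (u x)) ^ (j + 1)
        - ((j : ℂ) + 1) * (1 + u x * conj (u x)) ^ j *
            (α * conj (u x) ^ a * u x + β * u x ^ b * conj (u x))) * e3
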